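/- arXiv:1107.0919 — 5 statements merged into one kernel-verified Lean document; each statement's English description precedes it below -/
import Mathlib

section
/- Let G1 and G2 be labelled graphs over the same finite set of actions Σ, with node sets V1 and V2. Let n, k ∈ ℕ, let ū = (u1,…,uk) ∈ V1^k, v̄ = (v1,…,vk) ∈ V2^k, u ∈ V1 and v ∈ V2 be such that u ∉ S_{2n+1}(G1, ū) and v ∉ S_{2n+1}(G2, v̄). If f : S_n(G1, ū) → S_n(G2, v̄) and f' : S_n(G1, u) → S_n(G2, v) are isomorphisms, then the combined map f ⊎ f' : S_n(G1, u, ū) → S_n(G2, v, v̄) is an isomorphism. -/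
/-! Spheres of radius `n` around centres at distance more than `2n + 1` are disjoint and joined
by no edge, since a common node or an edge between them would give a path of length at most
`2n + 1` between the centres. Isomorphisms of two such separated pieces therefore glue to an
isomorphism of their union: an edge of the union either lies inside one piece, where one of the
two maps preserves it, or would join the pieces, which happens on neither side. -/

/-- One (undirected) step in a labelled graph: an edge in either direction. -/
def ustep {V S : Type*} (G : S → V → V → Prop) (x y : V) : Prop := ∃ a, G a x y ∨ G a y x

/-- `reach E n u v` holds iff there is a path of length at most `n` from `u` to `v`
along the relation `E`, i.e. iff the `E`-distance of `u` and `v` is at most `n`. -/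
def reach {V : Type*} (E : V → V → Prop) : ℕ → V → V → Prop
  | 0, u, v => u = v
  | n + 1, u, v => u = v ∨ ∃ w, E u w ∧ reach E n w v

/-- The sphere `S_n(G, u)` of radius `n` around `u` in the labelled graph `G`:
all nodes of undirected distance at most `n` from `u`. -/
def sphere {V S : Type*} (G : S → V → V → Prop) (n : ℕ) (u : V) : Set V :=
  {v | reach (ustep G) n u v}

/-- `f` is an isomorphism from the substructure of the labelled graph `G1` induced by `S1`
onto the substructure of the labelled graph `G2` induced by `S2`. -/
def SphIso {V1 V2 S : Type*} (G1 : S → V1 → V1 → Prop) (G2 : S → V2 → V2 → Prop)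
    (S1 : Set V1) (S2 : Set V2) (f : V1 → V2) : Prop :=
  Set.BijOn f S1 S2 ∧ ∀ a, ∀ x ∈ S1, ∀ y ∈ S1, (G1 a x y ↔ G2 a (f x) (f y))

/-- The lifting of an edge relation on `V` to nonempty words over `V` (the graph `G⁺`):
a single letter is rewritten. -/
def liftRel {V S : Type*} (G : S → V → V → Prop) (a : S) (w w' : List V) : Prop :=
  ∃ (x y : List V) (s s' : V), G a s s' ∧ w = x ++ s :: y ∧ w' = x ++ s' :: y

section Reach

variable {V : Type*} {E : V → V → Prop}

lemma reach_refl (n : ℕ) (x : V) : reach E n x x := by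
  cases n with
  | zero => rfl
  | succ n => exact Or.inl rfl

lemma reach_of_rel {x y : V} (h : E x y) : reach E 1 x y := Or.inr ⟨y, h, rfl⟩

lemma reach_succ {n : ℕ} {x y : V} (h : reach E n x y) : reach E (n + 1) x y := by
  induction n generalizing x with
  | zero => exact Or.inl h
  | succ n ih =>
    rcases h with rfl | ⟨w, hxw, hwy⟩
    · exact Or.inl rfl
    · exact Or.inr ⟨w, hxw, ih hwy⟩

lemma reach_mono {m n : ℕ} (hmn : m ≤ n) {x y : V} (h : reach E m x y) : reach E n x y := by
  induction hmn with
  | refl => exact h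
  | step _ ih => exact reach_succ ih

lemma reach_trans {m n : ℕ} {x y z : V} (hxy : reach E m x y) (hyz : reach E n y z) :
    reach E (m + n) x z := by
  induction m generalizing x with
  | zero =>
    obtain rfl : x = y := hxy
    simpa using hyz
  | succ m ih =>
    rcases hxy with rfl | ⟨w, hxw, hwy⟩
    · exact reach_mono (by omega) hyz
    · rw [Nat.add_right_comm]
      exact Or.inr ⟨w, hxw, ih hwy⟩

lemma reach_symm [Std.Symm E] {n : ℕ} {x y : V} (h : reach E n x y) : reach E n y x := by
  induction n generalizing x y with
  | zero => exact (show x = y from h).symm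
  | succ n ih =>
    rcases h with rfl | ⟨w, hxw, hwy⟩
    · exact Or.inl rfl
    · exact reach_trans (ih hwy) (reach_of_rel (Std.Symm.symm _ _ hxw))

end Reach

section Sphere

variable {V S : Type*} {G : S → V → V → Prop}

instance : Std.Symm (ustep G) where
  symm _ _ := fun ⟨a, h⟩ => ⟨a, h.symm⟩

lemma mem_sphere_self (n : ℕ) (c : V) : c ∈ sphere G n c := reach_refl n c

lemma mem_sphere_comm {n : ℕ} {c x : V} : x ∈ sphere G n c ↔ c ∈ sphere G n x :=
  ⟨reach_symm, reach_symm⟩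

lemma sphere_mono {m n : ℕ} (hmn : m ≤ n) (c : V) : sphere G m c ⊆ sphere G n c :=
  fun _ => reach_mono hmn

lemma mem_sphere_add {m n : ℕ} {c x y : V} (hx : x ∈ sphere G m c) (hy : y ∈ sphere G n x) :
    y ∈ sphere G (m + n) c :=
  reach_trans hx hy

lemma disjoint_sphere {n : ℕ} {c d : V} (h : c ∉ sphere G (2 * n + 1) d) :
    Disjoint (sphere G n c) (sphere G n d) := by
  refine Set.disjoint_left.mpr fun x hxc hxd => h ?_
  exact sphere_mono (by omega) d (mem_sphere_add hxd (mem_sphere_comm.mp hxc))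

lemma not_ustep_of_mem_sphere {n : ℕ} {c d x y : V} (h : c ∉ sphere G (2 * n + 1) d)
    (hx : x ∈ sphere G n c) (hy : y ∈ sphere G n d) : ¬ ustep G x y := by
  intro hxy
  have hyx : x ∈ sphere G 1 y := reach_of_rel (Std.Symm.symm _ _ hxy)
  have hc : c ∈ sphere G (n + 1 + n) d :=
    mem_sphere_add (mem_sphere_add hy hyx) (mem_sphere_comm.mp hx)
  exact h (sphere_mono (by omega) d hc)

lemma disjoint_sphere_iUnion {ι : Type*} {n : ℕ} {c : V} {d : ι → V}
    (h : c ∉ ⋃ i, sphere G (2 * n + 1) (d i)) :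
    Disjoint (sphere G n c) (⋃ i, sphere G n (d i)) :=
  Set.disjoint_iUnion_right.mpr fun i => disjoint_sphere fun hc => h (Set.mem_iUnion_of_mem i hc)

lemma not_ustep_of_mem_sphere_of_mem_iUnion {ι : Type*} {n : ℕ} {c x y : V} {d : ι → V}
    (h : c ∉ ⋃ i, sphere G (2 * n + 1) (d i))
    (hx : x ∈ sphere G n c) (hy : y ∈ ⋃ i, sphere G n (d i)) : ¬ ustep G x y := by
  obtain ⟨i, hy⟩ := Set.mem_iUnion.mp hy
  exact not_ustep_of_mem_sphere (fun hc => h (Set.mem_iUnion_of_mem i hc)) hx hy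

end Sphere

namespace SphIso

variable {V1 V2 S : Type*} {G1 : S → V1 → V1 → Prop} {G2 : S → V2 → V2 → Prop}
  {A1 B1 : Set V1} {A2 B2 : Set V2} {f g : V1 → V2}

lemma congr (hf : SphIso G1 G2 A1 A2 f) (hfg : Set.EqOn f g A1) : SphIso G1 G2 A1 A2 g :=
  ⟨hf.1.congr hfg, fun a x hx y hy => by
    rw [← hfg hx, ← hfg hy]
    exact hf.2 a x hx y hy⟩

lemma union (hA : SphIso G1 G2 A1 A2 f) (hB : SphIso G1 G2 B1 B2 f) (hAB2 : Disjoint A2 B2)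
    (hsep1 : ∀ x ∈ A1, ∀ y ∈ B1, ¬ ustep G1 x y) (hsep2 : ∀ x ∈ A2, ∀ y ∈ B2, ¬ ustep G2 x y) :
    SphIso G1 G2 (A1 ∪ B1) (A2 ∪ B2) f := by
  have hinj : Set.InjOn f (A1 ∪ B1) := by
    rintro x (hx | hx) y (hy | hy) hxy
    · exact hA.1.injOn hx hy hxy
    · exact absurd hxy (hAB2.ne_of_mem (hA.1.mapsTo hx) (hB.1.mapsTo hy))
    · exact absurd hxy.symm (hAB2.ne_of_mem (hA.1.mapsTo hy) (hB.1.mapsTo hx))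
    · exact hB.1.injOn hx hy hxy
  refine ⟨hA.1.union hB.1 hinj, ?_⟩
  rintro a x (hx | hx) y (hy | hy)
  · exact hA.2 a x hx y hy
  · exact iff_of_false (fun e => hsep1 x hx y hy ⟨a, .inl e⟩)
      (fun e => hsep2 _ (hA.1.mapsTo hx) _ (hB.1.mapsTo hy) ⟨a, .inl e⟩)
  · exact iff_of_false (fun e => hsep1 y hy x hx ⟨a, .inr e⟩)
      (fun e => hsep2 _ (hA.1.mapsTo hy) _ (hB.1.mapsTo hx) ⟨a, .inr e⟩)
  · exact hB.2 a x hx y hy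

end SphIso

theorem stmt0_general {S V1 V2 : Type*}
    (G1 : S → V1 → V1 → Prop) (G2 : S → V2 → V2 → Prop)
    (n k : ℕ) (us : Fin k → V1) (vs : Fin k → V2) (u : V1) (v : V2)
    (hu : u ∉ ⋃ i, sphere G1 (2 * n + 1) (us i))
    (hv : v ∉ ⋃ i, sphere G2 (2 * n + 1) (vs i))
    (f f' : V1 → V2)
    (hf : SphIso G1 G2 (⋃ i, sphere G1 n (us i)) (⋃ i, sphere G2 n (vs i)) f)
    (hfconst : ∀ i, f (us i) = vs i)
    (hf' : SphIso G1 G2 (sphere G1 n u) (sphere G2 n v) f')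
    (hf'const : f' u = v) :
    ∃ g : V1 → V2,
      (∀ x ∈ sphere G1 n u, g x = f' x) ∧
      (∀ x ∈ ⋃ i, sphere G1 n (us i), g x = f x) ∧
      SphIso G1 G2 (sphere G1 n u ∪ ⋃ i, sphere G1 n (us i))
        (sphere G2 n v ∪ ⋃ i, sphere G2 n (vs i)) g ∧
      g u = v ∧ ∀ i, g (us i) = vs i := by
  classical
  set g := (sphere G1 n u).piecewise f' f
  have hg' : Set.EqOn g f' (sphere G1 n u) := Set.piecewise_eqOn _ f' f
  have hg : Set.EqOn g f (⋃ i, sphere G1 n (us i)) := fun x hx =>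
    Set.piecewise_eq_of_notMem _ _ _ ((disjoint_sphere_iUnion hu).notMem_of_mem_right hx)
  refine ⟨g, fun x hx => hg' hx, fun x hx => hg hx, ?_, ?_, fun i => ?_⟩
  · exact (hf'.congr hg'.symm).union (hf.congr hg.symm) (disjoint_sphere_iUnion hv)
      (fun _ hx _ hy => not_ustep_of_mem_sphere_of_mem_iUnion hu hx hy)
      (fun _ hx _ hy => not_ustep_of_mem_sphere_of_mem_iUnion hv hx hy)
  · rw [hg' (mem_sphere_self n u), hf'const]
  · rw [hg (Set.mem_iUnion_of_mem i (mem_sphere_self n (us i))), hfconst]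

/-- Let `G1`, `G2` be labelled graphs over the same finite set of actions,
`ū ∈ V1^k`, `v̄ ∈ V2^k`, `u ∈ V1`, `v ∈ V2` with `u ∉ S_{2n+1}(G1, ū)` and
`v ∉ S_{2n+1}(G2, v̄)`. If `f : S_n(G1, ū) → S_n(G2, v̄)` and `f' : S_n(G1, u) → S_n(G2, v)`
are isomorphisms, then `f ⊎ f' : S_n(G1, u, ū) → S_n(G2, v, v̄)` is an isomorphism. -/
theorem stmt0 {S V1 V2 : Type*} [Fintype S]
    (G1 : S → V1 → V1 → Prop) (G2 : S → V2 → V2 → Prop)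
    (n k : ℕ) (us : Fin k → V1) (vs : Fin k → V2) (u : V1) (v : V2)
    (hu : u ∉ ⋃ i, sphere G1 (2 * n + 1) (us i))
    (hv : v ∉ ⋃ i, sphere G2 (2 * n + 1) (vs i))
    (f f' : V1 → V2)
    (hf : SphIso G1 G2 (⋃ i, sphere G1 n (us i)) (⋃ i, sphere G2 n (vs i)) f)
    (hfconst : ∀ i, f (us i) = vs i)
    (hf' : SphIso G1 G2 (sphere G1 n u) (sphere G2 n v) f')
    (hf'const : f' u = v) :
    ∃ g : V1 → V2,
      (∀ x ∈ sphere G1 n u, g x = f' x) ∧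
      (∀ x ∈ ⋃ i, sphere G1 n (us i), g x = f x) ∧
      SphIso G1 G2 (sphere G1 n u ∪ ⋃ i, sphere G1 n (us i))
        (sphere G2 n v ∪ ⋃ i, sphere G2 n (vs i)) g ∧
      g u = v ∧ ∀ i, g (us i) = vs i :=
  stmt0_general G1 G2 n k us vs u v hu hv f f' hf hfconst hf' hf'const
end

section
/- Let A be a ranked alphabet and let ranks = {m ∈ ℕ : m ≥ 1 and A_m ≠ ∅}. Then: (1) for every n ≥ 1, there is a ranked tree t ∈ Trees_A with exactly n leaves if and only if there exist numbers d_m ∈ ℕ (for m ∈ ranks) with n = 1 + Σ_{m ∈ ranks} d_m·(m−1); and (2) for every n ≥ 2, these conditions are furthermore equivalent to the existence of a chain t ∈ Trees_A with exactly n leaves. -/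
/-!
Each internal node of rank `m` turns one leaf into `m` leaves, so a tree whose internal nodes
carry the labels `a₁, …, a_k` has `1 + Σ (rank aᵢ - 1)` leaves; grouping the labels by rank gives
the numbers `d_m`. Conversely, such a sum is realised by a caterpillar: a spine of the chosen
symbols, the remaining `rank - 1` children of each spine node being leaves labelled by a fixed
rank-0 symbol. Only the first child of a spine node can be internal, so the caterpillar is a chain
as soon as it has an internal node, that is, when `n ≥ 2`.
-/

/-- Ranked trees over a set `A` of symbols (the rank of a symbol is given separately
by a function `rank : A → ℕ`; well-formedness is the predicate `RTree.WF`). -/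
inductive RTree (A : Type) : Type
  | node : A → List (RTree A) → RTree A

namespace RTree

variable {A : Type}

/-- The subtree `t ↾ x` of `t` rooted at the address `x`; the children of a node with
child list `ts` are addressed by `0, …, ts.length - 1`, and addresses are words of
child indices. Returns `none` if `x` is not a node of `t`. -/
def subtreeAt : RTree A → List ℕ → Option (RTree A)
  | t, [] => some t
  | node _ ts, i :: x =>
    match ts[i]? with
    | some t' => subtreeAt t' x
    | none => none

/-- The domain `D_t` of `t`: the set of addresses of nodes of `t`. -/
def dom (t : RTree A) : Set (List ℕ) := {x | subtreeAt t x ≠ none}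

/-- `size t` is the number of nodes of `t`. -/
noncomputable def size (t : RTree A) : ℕ := (dom t).ncard

/-- The size of the subtree of `t` rooted at `x` (`0` if `x` is not a node of `t`). -/
noncomputable def sizeAt (t : RTree A) (x : List ℕ) : ℕ :=
  match subtreeAt t x with
  | some s => size s
  | none => 0

/-- The node at address `x` has some child, i.e. it is an internal node (for
well-formed trees this is equivalent to its label having rank at least one). -/
def hasChildAt (t : RTree A) (x : List ℕ) : Prop := ∃ i : ℕ, x ++ [i] ∈ dom t

/-- The number of leaves of `t`. -/
noncomputable def leavesCount (t : RTree A) : ℕ := {x | x ∈ dom t ∧ ¬ hasChildAt t x}.ncard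

/-- The number of internal nodes of `t`. -/
noncomputable def internalCount (t : RTree A) : ℕ := {x | x ∈ dom t ∧ hasChildAt t x}.ncard

/-- `t` is a chain: its domain is not just the root, and every (internal) node has at
most one internal child. -/
def isChain (t : RTree A) : Prop :=
  dom t ≠ {[]} ∧
    ∀ x ∈ dom t, {i : ℕ | x ++ [i] ∈ dom t ∧ hasChildAt t (x ++ [i])}.ncard ≤ 1

/-- Well-formedness of a ranked tree: every node labelled by a symbol of rank `i`
has exactly `i` children. -/
inductive WF (rank : A → ℕ) : RTree A → Prop
  | node (a : A) (ts : List (RTree A)) : ts.length = rank a →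
      (∀ t ∈ ts, WF rank t) → WF rank (node a ts)

end RTree

theorem Finsupp.sum_map_toMultiset {α M : Type*} [AddCommMonoid M] (d : α →₀ ℕ) (g : α → M) :
    ((Finsupp.toMultiset d).map g).sum = d.sum fun a k => k • g a := by
  rw [Finsupp.toMultiset_map, Finsupp.sum_toMultiset]
  exact Finsupp.sum_mapDomain_index (fun _ => zero_nsmul _) (fun _ _ _ => add_nsmul _ _ _)

namespace RTree

variable {A : Type}

theorem subtreeAt_node_cons (a : A) (ts : List (RTree A)) (i : ℕ) (x : List ℕ) :
    subtreeAt (node a ts) (i :: x) = ts[i]?.bind (subtreeAt · x) := by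
  simp only [subtreeAt]
  cases ts[i]? <;> rfl

theorem nil_mem_dom (t : RTree A) : [] ∈ dom t := by
  simp [dom, subtreeAt]

theorem cons_mem_dom_node {a : A} {ts : List (RTree A)} {i : ℕ} {x : List ℕ} :
    i :: x ∈ dom (node a ts) ↔ ∃ h : i < ts.length, x ∈ dom ts[i] := by
  by_cases h : i < ts.length <;> simp [dom, subtreeAt_node_cons, h]

theorem hasChildAt_node_nil {a : A} {ts : List (RTree A)} :
    hasChildAt (node a ts) [] ↔ ts ≠ [] := by
  simp only [hasChildAt, List.nil_append, cons_mem_dom_node, nil_mem_dom, exists_prop, and_true,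
    ← List.length_pos_iff]
  exact ⟨fun ⟨_, h⟩ => Nat.zero_lt_of_lt h, fun h => ⟨0, h⟩⟩

theorem hasChildAt_node_cons {a : A} {ts : List (RTree A)} {i : ℕ} {x : List ℕ} :
    hasChildAt (node a ts) (i :: x) ↔ ∃ h : i < ts.length, hasChildAt ts[i] x := by
  simp only [hasChildAt, List.cons_append, cons_mem_dom_node]
  exact ⟨fun ⟨j, h, hj⟩ => ⟨h, j, hj⟩, fun ⟨h, j, hj⟩ => ⟨j, h, hj⟩⟩

theorem dom_node (a : A) (ts : List (RTree A)) :
    dom (node a ts) = insert [] (⋃ i : Fin ts.length, (i.val :: ·) '' dom ts[i]) := by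
  ext (_ | ⟨i, x⟩)
  · simp [nil_mem_dom]
  · simp [cons_mem_dom_node, Fin.exists_iff]

theorem dom_finite : ∀ t : RTree A, (dom t).Finite
  | node a ts => by
    rw [dom_node]
    exact ((Set.finite_iUnion fun i : Fin ts.length => (dom_finite ts[i]).image _)).insert _
decreasing_by
  have := List.sizeOf_lt_of_mem (List.getElem_mem (l := ts) (n := i.val) i.isLt)
  simp only [node.sizeOf_spec, Fin.getElem_fin]
  omega

def leaves (t : RTree A) : Set (List ℕ) := {x | x ∈ dom t ∧ ¬ hasChildAt t x}

theorem leaves_node {a : A} {ts : List (RTree A)} (hts : ts ≠ []) :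
    leaves (node a ts) = ⋃ i : Fin ts.length, (i.val :: ·) '' leaves ts[i] := by
  ext (_ | ⟨i, x⟩)
  · simp [leaves, hasChildAt_node_nil, hts]
  · simp only [leaves, Set.mem_ofPred_eq, cons_mem_dom_node, hasChildAt_node_cons]
    simp only [Set.mem_iUnion, Set.mem_image, List.cons.injEq, Fin.exists_iff, Fin.getElem_fin]
    constructor
    · rintro ⟨⟨h, hx⟩, hc⟩
      exact ⟨i, h, x, ⟨hx, fun hc' => hc ⟨h, hc'⟩⟩, rfl, rfl⟩
    · rintro ⟨i, h, x, ⟨hx, hc⟩, rfl, rfl⟩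
      exact ⟨⟨h, hx⟩, fun ⟨_, hc'⟩ => hc hc'⟩

theorem leavesCount_node {a : A} {ts : List (RTree A)} (hts : ts ≠ []) :
    leavesCount (node a ts) = (ts.map leavesCount).sum := by
  rw [leavesCount, ← leaves, leaves_node hts, Set.ncard_iUnion_of_finite, finsum_eq_sum_of_fintype]
  · simp only [Set.ncard_image_of_injective _ List.cons_injective]
    exact Fin.sum_univ_fun_getElem ts (fun t => (leaves t).ncard)
  · exact fun i => ((dom_finite _).subset fun _ hx => hx.1).image _
  · intro i j hij
    rw [Function.onFun, Set.disjoint_iff_forall_ne]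
    rintro _ ⟨x, -, rfl⟩ _ ⟨y, -, rfl⟩ h
    exact hij (Fin.ext (List.cons.inj h).1)

theorem leavesCount_leaf (a : A) : leavesCount (node a ([] : List (RTree A))) = 1 := by
  have : leaves (node a ([] : List (RTree A))) = {[]} := by
    ext (_ | ⟨i, x⟩) <;> simp [leaves, hasChildAt_node_nil, cons_mem_dom_node, nil_mem_dom]
  rw [leavesCount, ← leaves, this, Set.ncard_singleton]

variable {rank : A → ℕ}

theorem exists_sum_leavesCount_eq {ts : List (RTree A)}
    (h : ∀ t ∈ ts, ∃ l : List A, (∀ a ∈ l, 1 ≤ rank a) ∧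
      leavesCount t = 1 + (l.map (rank · - 1)).sum) :
    ∃ l : List A, (∀ a ∈ l, 1 ≤ rank a) ∧
      (ts.map leavesCount).sum = ts.length + (l.map (rank · - 1)).sum := by
  induction ts with
  | nil => exact ⟨[], by simp, by simp⟩
  | cons t ts ih =>
    obtain ⟨l, hl, ht⟩ := h t List.mem_cons_self
    obtain ⟨l', hl', hts⟩ := ih fun t' ht' => h t' (List.mem_cons_of_mem t ht')
    refine ⟨l ++ l', fun a ha => (List.mem_append.1 ha).elim (hl a) (hl' a), ?_⟩
    simp only [List.map_cons, List.sum_cons, List.length_cons, List.map_append, List.sum_append,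
      ht, hts]
    ring

theorem WF.exists_leavesCount_eq {t : RTree A} (ht : WF rank t) :
    ∃ l : List A, (∀ a ∈ l, 1 ≤ rank a) ∧ leavesCount t = 1 + (l.map (rank · - 1)).sum := by
  induction ht with
  | node a ts hlen _ ih =>
    rcases eq_or_ne ts [] with rfl | hts
    · exact ⟨[], by simp, by simp [leavesCount_leaf]⟩
    obtain ⟨l, hl, hsum⟩ := exists_sum_leavesCount_eq ih
    have hrank : 1 ≤ rank a := hlen ▸ List.length_pos_iff.2 hts
    refine ⟨a :: l, List.forall_mem_cons.2 ⟨hrank, hl⟩, ?_⟩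
    rw [leavesCount_node hts, hsum, hlen, List.map_cons, List.sum_cons]
    omega

def internalChildren (t : RTree A) (x : List ℕ) : Set ℕ :=
  {i | x ++ [i] ∈ dom t ∧ hasChildAt t (x ++ [i])}

theorem internalChildren_node_cons {a : A} {ts : List (RTree A)} {i : ℕ} (h : i < ts.length)
    (x : List ℕ) : internalChildren (node a ts) (i :: x) = internalChildren ts[i] x := by
  ext j
  simp [internalChildren, cons_mem_dom_node, hasChildAt_node_cons, h]

theorem internalChildren_node_nil_subset {a : A} {ts : List (RTree A)}
    (h : ∀ i (hi : i < ts.length), 0 < i → ¬ hasChildAt ts[i] []) :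
    internalChildren (node a ts) [] ⊆ {0} := by
  rintro i ⟨-, hi⟩
  rw [List.nil_append, hasChildAt_node_cons] at hi
  obtain ⟨hlt, hc⟩ := hi
  by_contra hne
  exact h i hlt (Nat.pos_of_ne_zero hne) hc

theorem ncard_internalChildren_node_le_one {a : A} {ts : List (RTree A)}
    (hfirst : ∀ i (hi : i < ts.length), 0 < i → ¬ hasChildAt ts[i] [])
    (hts : ∀ t ∈ ts, ∀ x ∈ dom t, (internalChildren t x).ncard ≤ 1) :
    ∀ x ∈ dom (node a ts), (internalChildren (node a ts) x).ncard ≤ 1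
  | [], _ => (Set.ncard_le_ncard (internalChildren_node_nil_subset hfirst)).trans
      (Set.ncard_singleton 0).le
  | i :: x, hx => by
    obtain ⟨hi, hx⟩ := cons_mem_dom_node.1 hx
    rw [internalChildren_node_cons hi]
    exact hts _ (List.getElem_mem hi) x hx

variable (rank) (c : A)

def caterpillar : List A → RTree A
  | [] => node c []
  | a :: l => node a (caterpillar l :: List.replicate (rank a - 1) (node c []))

variable {rank c}

theorem wf_caterpillar (hc : rank c = 0) {l : List A} (hl : ∀ a ∈ l, 1 ≤ rank a) :
    WF rank (caterpillar rank c l) := by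
  induction l with
  | nil => exact .node c [] (by simp [hc]) (by simp)
  | cons a l ih =>
    have hleaf : WF rank (node c []) := .node c [] (by simp [hc]) (by simp)
    refine .node a _ ?_ ?_
    · simp only [List.length_cons, List.length_replicate]
      have := hl a List.mem_cons_self
      omega
    · simp only [List.mem_cons, List.mem_replicate]
      rintro t (rfl | ⟨-, rfl⟩)
      exacts [ih fun b hb => hl b (List.mem_cons_of_mem a hb), hleaf]

theorem leavesCount_caterpillar (l : List A) :
    leavesCount (caterpillar rank c l) = 1 + (l.map (rank · - 1)).sum := by
  induction l with
  | nil => exact leavesCount_leaf c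
  | cons a l ih =>
    rw [caterpillar, leavesCount_node (List.cons_ne_nil _ _)]
    simp only [List.map_cons, ih, List.map_replicate, leavesCount_leaf, List.sum_cons,
      List.sum_replicate, smul_eq_mul, mul_one]
    omega

theorem ncard_internalChildren_caterpillar_le_one (l : List A) :
    ∀ x ∈ dom (caterpillar rank c l), (internalChildren (caterpillar rank c l) x).ncard ≤ 1 := by
  induction l with
  | nil => exact ncard_internalChildren_node_le_one (by simp) (by simp)
  | cons a l ih =>
    have hleaf := ncard_internalChildren_node_le_one (a := c) (ts := []) (by simp) (by simp)
    refine ncard_internalChildren_node_le_one ?_ ?_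
    · rintro (_ | i) hi hpos
      · exact absurd hpos (lt_irrefl 0)
      · simp [hasChildAt_node_nil]
    · simp only [List.mem_cons, List.mem_replicate]
      rintro t (rfl | ⟨-, rfl⟩)
      exacts [ih, hleaf]

theorem isChain_caterpillar {l : List A} (hl : l ≠ []) : isChain (caterpillar rank c l) := by
  refine ⟨?_, ncard_internalChildren_caterpillar_le_one l⟩
  obtain ⟨a, l, rfl⟩ := List.exists_cons_of_ne_nil hl
  intro h
  have : [0] ∈ dom (caterpillar rank c (a :: l)) := cons_mem_dom_node.2 ⟨by simp, nil_mem_dom _⟩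
  simp [h] at this

theorem exists_finsupp_iff_exists_labels [Nonempty A] (n : ℕ) :
    (∃ d : ℕ →₀ ℕ, (∀ m ∈ d.support, 1 ≤ m ∧ ∃ a, rank a = m) ∧
        n = 1 + d.sum fun m k => k * (m - 1)) ↔
      ∃ l : List A, (∀ a ∈ l, 1 ≤ rank a) ∧ n = 1 + (l.map (rank · - 1)).sum := by
  simp_rw [← smul_eq_mul, ← Finsupp.sum_map_toMultiset]
  constructor
  · rintro ⟨d, hd, rfl⟩
    choose! sym hsym using fun m hm => (hd m hm).2
    refine ⟨((Finsupp.toMultiset d).map sym).toList, ?_, ?_⟩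
    · intro a ha
      obtain ⟨m, hm, rfl⟩ := Multiset.mem_map.1 (Multiset.mem_toList.1 ha)
      rw [Finsupp.mem_toMultiset] at hm
      rw [hsym m hm]
      exact (hd m hm).1
    · rw [← Multiset.sum_coe, ← Multiset.map_coe, Multiset.coe_toList, Multiset.map_map]
      congr 2
      refine Multiset.map_congr rfl fun m hm => ?_
      rw [Function.comp_apply, hsym m ((Finsupp.mem_toMultiset d m).1 hm)]
  · rintro ⟨l, hl, rfl⟩
    classical
    refine ⟨Multiset.toFinsupp (l.map rank), fun m hm => ?_, ?_⟩
    · rw [Multiset.toFinsupp_support, Multiset.mem_toFinset, Multiset.mem_coe, List.mem_map] at hm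
      obtain ⟨a, ha, rfl⟩ := hm
      exact ⟨hl a ha, a, rfl⟩
    · rw [Multiset.toFinsupp_toMultiset, Multiset.map_coe, Multiset.sum_coe, List.map_map]
      rfl

theorem exists_wf_leavesCount_eq_iff (hc : rank c = 0) (n : ℕ) :
    (∃ t : RTree A, WF rank t ∧ leavesCount t = n) ↔
      ∃ l : List A, (∀ a ∈ l, 1 ≤ rank a) ∧ n = 1 + (l.map (rank · - 1)).sum := by
  constructor
  · rintro ⟨t, ht, rfl⟩
    exact ht.exists_leavesCount_eq
  · rintro ⟨l, hl, rfl⟩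
    exact ⟨_, wf_caterpillar hc hl, leavesCount_caterpillar l⟩

theorem exists_wf_leavesCount_eq_iff_exists_chain (hc : rank c = 0) {n : ℕ} (hn : 2 ≤ n) :
    (∃ t : RTree A, WF rank t ∧ leavesCount t = n) ↔
      ∃ t : RTree A, WF rank t ∧ isChain t ∧ leavesCount t = n := by
  refine ⟨fun h => ?_, fun ⟨t, ht, _, htn⟩ => ⟨t, ht, htn⟩⟩
  obtain ⟨l, hl, rfl⟩ := (exists_wf_leavesCount_eq_iff hc _).1 h
  have hl' : l ≠ [] := by
    rintro rfl
    simp at hn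
  exact ⟨_, wf_caterpillar hc hl, isChain_caterpillar hl', leavesCount_caterpillar l⟩

end RTree

theorem stmt3_general (A : Type) (rank : A → ℕ) (h0 : ∃ a, rank a = 0) :
    (∀ n : ℕ, 1 ≤ n →
      ((∃ t : RTree A, RTree.WF rank t ∧ RTree.leavesCount t = n) ↔
        ∃ d : ℕ →₀ ℕ, (∀ m ∈ d.support, 1 ≤ m ∧ ∃ a, rank a = m) ∧
          n = 1 + d.sum fun m k => k * (m - 1)))
    ∧ (∀ n : ℕ, 2 ≤ n →
      (((∃ t : RTree A, RTree.WF rank t ∧ RTree.leavesCount t = n) ↔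
        ∃ t : RTree A, RTree.WF rank t ∧ RTree.isChain t ∧ RTree.leavesCount t = n)
       ∧ ((∃ d : ℕ →₀ ℕ, (∀ m ∈ d.support, 1 ≤ m ∧ ∃ a, rank a = m) ∧
             n = 1 + d.sum fun m k => k * (m - 1)) ↔
          ∃ t : RTree A, RTree.WF rank t ∧ RTree.isChain t ∧ RTree.leavesCount t = n))) := by
  obtain ⟨c, hc⟩ := h0
  have : Nonempty A := ⟨c⟩
  refine ⟨fun n _ => ?_, fun n hn => ⟨RTree.exists_wf_leavesCount_eq_iff_exists_chain hc hn, ?_⟩⟩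
  · rw [RTree.exists_finsupp_iff_exists_labels, RTree.exists_wf_leavesCount_eq_iff hc]
  · rw [RTree.exists_finsupp_iff_exists_labels, ← RTree.exists_wf_leavesCount_eq_iff hc,
      RTree.exists_wf_leavesCount_eq_iff_exists_chain hc hn]

/-- Let `A` be a ranked alphabet (with a rank-0 symbol) and
`ranks = {m ≥ 1 : A_m ≠ ∅}`. (1) For every `n ≥ 1`, there is a ranked tree over `A`
with exactly `n` leaves iff there are numbers `d_m ∈ ℕ` (for `m ∈ ranks`) with
`n = 1 + Σ_{m ∈ ranks} d_m (m-1)`. (2) For every `n ≥ 2`, these conditions are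
moreover equivalent to the existence of a chain over `A` with exactly `n` leaves. -/
theorem stmt3 (A : Type) [Fintype A] (rank : A → ℕ) (h0 : ∃ a, rank a = 0) :
    (∀ n : ℕ, 1 ≤ n →
      ((∃ t : RTree A, RTree.WF rank t ∧ RTree.leavesCount t = n) ↔
        ∃ d : ℕ →₀ ℕ, (∀ m ∈ d.support, 1 ≤ m ∧ ∃ a, rank a = m) ∧
          n = 1 + d.sum fun m k => k * (m - 1)))
    ∧ (∀ n : ℕ, 2 ≤ n →
      (((∃ t : RTree A, RTree.WF rank t ∧ RTree.leavesCount t = n) ↔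
        ∃ t : RTree A, RTree.WF rank t ∧ RTree.isChain t ∧ RTree.leavesCount t = n)
       ∧ ((∃ d : ℕ →₀ ℕ, (∀ m ∈ d.support, 1 ≤ m ∧ ∃ a, rank a = m) ∧
             n = 1 + d.sum fun m k => k * (m - 1)) ↔
          ∃ t : RTree A, RTree.WF rank t ∧ RTree.isChain t ∧ RTree.leavesCount t = n))) :=
  stmt3_general A rank h0
end

section
/- Let V be a finite nonempty alphabet with |V| = n and let Γ be a finite alphabet. Let α ∈ ℕ, let u,v ∈ Γ^* and u' ∈ V^* with |u| = |u'|, suppose u ≡_{α·n} v, and suppose |v| ≥ α·n·|Γ|. Then there exists v' ∈ V^* with |v'| = |v| and u ⊗ u' ≡_α v ⊗ v'. -/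
/-!
Fix a letter `a ∈ Γ`. The letters of `u'` paired with the occurrences of `a` in `u` split
`|u|_a` into counts `c_b` (`b ∈ V`). We must split `|v|_a` into counts `g_b` with
`c_b ≡_α g_b` for every `b`. If `|u|_a = |v|_a` take `g = c`. Otherwise both counts are at
least `α·n`, so some `c_{b₀} ≥ α`; truncate every `c_b` at `α` and give the remaining
`|v|_a - ∑_b min(c_b, α) ≥ 0` to `b₀`. Any prescribed multiset of pairs whose first
components form `v` is then realised as `v ⊗ v'` for a suitable `v'`.
-/

/-- `ecount d u v` is the relation `u ≡_d v`: for every letter `a`, either `u` and `v`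
contain the same number of occurrences of `a`, or both contain at least `d` occurrences. -/
def ecount {α : Type*} [DecidableEq α] (d : ℕ) (u v : List α) : Prop :=
  ∀ a : α, u.count a = v.count a ∨ (d ≤ u.count a ∧ d ≤ v.count a)

/-- The per-letter relation of `≡_d`. -/
def ThresholdEq (d x y : ℕ) : Prop :=
  x = y ∨ (d ≤ x ∧ d ≤ y)

theorem exists_sum_eq_forall_thresholdEq {ι : Type*} [Fintype ι] [Nonempty ι] (d t : ℕ)
    (c : ι → ℕ) (h : ThresholdEq (d * Fintype.card ι) (∑ i, c i) t) :
    ∃ g : ι → ℕ, ∑ i, g i = t ∧ ∀ i, ThresholdEq d (c i) (g i) := by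
  classical
  rcases h with rfl | ⟨hc, ht⟩
  · exact ⟨c, rfl, fun _ => Or.inl rfl⟩
  obtain ⟨i₀, -, hi₀⟩ : ∃ i ∈ Finset.univ, d ≤ c i :=
    Finset.exists_le_of_sum_le Finset.univ_nonempty (by simpa [mul_comm] using hc)
  have htrunc : ∑ i, min (c i) d ≤ t := calc
    ∑ i, min (c i) d ≤ ∑ _i : ι, d := Finset.sum_le_sum fun i _ => min_le_right _ _
    _ ≤ t := by simpa [mul_comm] using ht
  refine ⟨fun i => min (c i) d + (Pi.single i₀ (t - ∑ i, min (c i) d) : ι → ℕ) i, ?_,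
    fun i => ?_⟩
  · rw [Finset.sum_add_distrib, Finset.sum_pi_single']
    simp [htrunc]
  · by_cases hi : i = i₀
    · subst hi
      simp [ThresholdEq, hi₀]
    · simp only [ThresholdEq, Pi.single_apply, hi, if_false, add_zero]
      omega

section Pairs

variable {Γ V : Type*} [DecidableEq Γ] [DecidableEq V]

theorem Multiset.sum_count_eq_count_map_fst [Fintype V] (M : Multiset (Γ × V)) (a : Γ) :
    ∑ b, M.count (a, b) = (M.map Prod.fst).count a := by
  induction M using Multiset.induction_on with
  | empty => simp
  | cons p M ih =>
    obtain ⟨a', b'⟩ := p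
    by_cases h : a = a'
    · subst h
      simp [Multiset.count_cons, Finset.sum_add_distrib, ih]
    · simp [ih, h]

theorem List.exists_coe_zip_eq_of_map_fst_eq (v : List Γ) (M : Multiset (Γ × V))
    (hM : M.map Prod.fst = v) :
    ∃ v' : List V, v'.length = v.length ∧ (v.zip v' : Multiset (Γ × V)) = M := by
  induction v generalizing M with
  | nil => exact ⟨[], rfl, (Multiset.map_eq_zero.mp hM).symm⟩
  | cons a w ih =>
    obtain ⟨p, hpM, rfl⟩ : ∃ p ∈ M, p.1 = a :=
      Multiset.mem_map.mp (hM ▸ Multiset.mem_cons_self a (w : Multiset Γ))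
    rw [← Multiset.cons_erase hpM, Multiset.map_cons, ← Multiset.cons_coe,
      Multiset.cons_inj_right] at hM
    obtain ⟨w', hlen, hzip⟩ := ih _ hM
    refine ⟨p.2 :: w', by simp [hlen], ?_⟩
    rw [List.zip_cons_cons, ← Multiset.cons_coe, hzip, Prod.mk.eta, Multiset.cons_erase hpM]

end Pairs

theorem stmt12_general (V Γ : Type) [Fintype V] [Nonempty V] [DecidableEq V]
    [Fintype Γ] [DecidableEq Γ] (n : ℕ) (hn : Fintype.card V = n)
    (α : ℕ) (u v : List Γ) (u' : List V) (hlen : u.length = u'.length)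
    (hequiv : ecount (α * n) u v) :
    ∃ v' : List V, v'.length = v.length ∧ ecount α (u.zip u') (v.zip v') := by
  subst hn
  set U : Multiset (Γ × V) := ↑(u.zip u')
  have hU_fst : U.map Prod.fst = u := by simp [U, List.map_fst_zip hlen.le]
  choose g hg_sum hg_equiv using fun a =>
    exists_sum_eq_forall_thresholdEq α (v.count a) (fun b => U.count (a, b))
      (by rw [U.sum_count_eq_count_map_fst, hU_fst, Multiset.coe_count]; exact hequiv a)
  set M : Multiset (Γ × V) := ∑ p : Γ × V, g p.1 p.2 • {p}
  have hM_count (p : Γ × V) : M.count p = g p.1 p.2 := by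
    simp [M, Multiset.count_sum', Multiset.count_singleton]
  have hM_fst : M.map Prod.fst = v := Multiset.ext.mpr fun a => by
    rw [← M.sum_count_eq_count_map_fst]
    simp [hM_count, hg_sum]
  obtain ⟨v', hv'_len, hv'_zip⟩ := List.exists_coe_zip_eq_of_map_fst_eq v M hM_fst
  refine ⟨v', hv'_len, fun p => ?_⟩
  have := hg_equiv p.1 p.2
  rwa [← hM_count, ← hv'_zip, Multiset.coe_count, Multiset.coe_count] at this

/-- Let `V` be a finite nonempty alphabet with `|V| = n` and `Γ` a
finite alphabet. Let `α ∈ ℕ`, `u, v ∈ Γ*`, `u' ∈ V*` with `|u| = |u'|`, `u ≡_{α·n} v`,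
and `|v| ≥ α·n·|Γ|`. Then there is `v' ∈ V*` with `|v'| = |v|` and `u ⊗ u' ≡_α v ⊗ v'`. -/
theorem stmt12 (V Γ : Type) [Fintype V] [Nonempty V] [DecidableEq V]
    [Fintype Γ] [DecidableEq Γ] (n : ℕ) (hn : Fintype.card V = n)
    (α : ℕ) (u v : List Γ) (u' : List V) (hlen : u.length = u'.length)
    (hequiv : ecount (α * n) u v) (hv : α * n * Fintype.card Γ ≤ v.length) :
    ∃ v' : List V, v'.length = v.length ∧ ecount α (u.zip u') (v.zip v') :=
  stmt12_general V Γ n hn α u v u' hlen hequiv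
end

section
/- Let V be a finite alphabet with |V| = n ≥ 2 and let (u_1,…,u_k), (v_1,…,v_k) ∈ (V^*)^k with (u_1,…,u_k) ≡_{k,0} (v_1,…,v_k). Then for all 1 ≤ i,j ≤ k: (1) u_i = u_j if and only if v_i = v_j; and (2) for all letters a,b ∈ V: u_j is obtained from u_i by replacing a single occurrence of a by b (i.e., u_i = x a y and u_j = x b y for some x,y ∈ V^*) if and only if v_j is obtained from v_i by replacing a single occurrence of a by b. Consequently (u_1,…,u_k) and (v_1,…,v_k) satisfy the same quantifier-free first-order formulas in the labelled graph G^+, where G is the labelled graph on V with action set V × V and edges a →^{(a,b)} b. -/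
/-- The convolution of a family `ws` of words (each of length `L`): the word of
length `L` whose `p`-th letter is the tuple (here: list) of the `p`-th letters of
the words of `ws`. -/
def conv {V : Type*} (ws : List (List V)) (L : ℕ) : List (List (Option V)) :=
  (List.range L).map fun p => ws.map fun w => w[p]?

/-- The equivalence `≡_{k,ℓ}` on `k`-tuples of words over an alphabet `V` with
`|V| = n`: (a) corresponding components have equal length on the `u`-side iff they do
on the `v`-side; (b) each component is either equal on both sides or of length at
least `n^(k+ℓ+1)` on both sides; (c) for each `i`, the convolutions of the components
of equal length (taken in the order of their indices) satisfy `≡_{n^(ℓ+1)}`. -/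
def TupEquiv {V : Type} [DecidableEq V] (n : ℕ) {k : ℕ} (ℓ : ℕ)
    (u v : Fin k → List V) : Prop :=
  (∀ i j, ((u i).length = (u j).length ↔ (v i).length = (v j).length)) ∧
  (∀ i, u i = v i ∨ (n ^ (k + ℓ + 1) ≤ (u i).length ∧ n ^ (k + ℓ + 1) ≤ (v i).length)) ∧
  (∀ i, ecount (n ^ (ℓ + 1))
    (conv (((List.finRange k).filter fun j => (u j).length == (u i).length).map u)
      (u i).length)
    (conv (((List.finRange k).filter fun j => (u j).length == (u i).length).map v)
      (v i).length))

open FirstOrder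

/-- The relation symbols of the signature of labelled graphs with action set `S`:
one binary relation symbol for every action. -/
def graphRelations (S : Type) : ℕ → Type
  | 2 => S
  | _ => Empty

/-- The first-order language of labelled graphs with action set `S`:
equality (built-in) and a binary relation symbol for every `a ∈ S`. -/
def graphLang (S : Type) : FirstOrder.Language :=
  { Functions := fun _ => Empty
    Relations := graphRelations S }

/-- The labelled graph `G` (with node set `V` and action set `S`) as a first-order
structure for the language `graphLang S`. -/
def graphStructure {S : Type} {V : Type*} (G : S → V → V → Prop) :
    (graphLang S).Structure V where
  funMap := fun f _ => Empty.elim f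
  RelMap := fun {n} r xs =>
    match n, r with
    | 2, a => G a (xs 0) (xs 1)
    | 0, r => Empty.elim r
    | 1, r => Empty.elim r
    | _+3, r => Empty.elim r

/-- The quantifier rank of a first-order formula. -/
def qr {L : FirstOrder.Language} {α : Type*} : {n : ℕ} → L.BoundedFormula α n → ℕ
  | _, Language.BoundedFormula.falsum => 0
  | _, Language.BoundedFormula.equal _ _ => 0
  | _, Language.BoundedFormula.rel _ _ => 0
  | _, Language.BoundedFormula.imp φ ψ => max (qr φ) (qr ψ)
  | _, Language.BoundedFormula.all φ => qr φ + 1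

/-- `realizeIn G φ as` holds iff the formula `φ` (over the signature of labelled graphs
with action set `S`) is true in the labelled graph `G` under the variable assignment `as`. -/
def realizeIn {S : Type} {V : Type*} (G : S → V → V → Prop) {α : Type}
    (φ : (graphLang S).Formula α) (as : α → V) : Prop :=
  have : (graphLang S).Structure V := graphStructure G
  φ.Realize as

/-! Projecting the convolution of the block of equal-length components onto the coordinates
`i` and `j` turns `≡_n` into `≡_n` on the word of letter pairs `u_i ⊗ u_j`, since counting up to
a threshold commutes with renaming letters. Now `u_i = u_j` says that every letter of
`u_i ⊗ u_j` is diagonal, and a single substitution `a ↦ b` from `u_i` to `u_j` says that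
`(a, b)` occurs in `u_i ⊗ u_j` and any non-diagonal letter is `(a, b)` and occurs exactly once.
For `n ≥ 2` both properties are invariant under `≡_n`. A quantifier-free formula of `G⁺` only
speaks about equalities and edges between components, which are facts of these two kinds. -/

section LetterSubst

variable {α β : Type*}

def LetterSubst (a b : α) (w w' : List α) : Prop :=
  ∃ x y, w = x ++ a :: y ∧ w' = x ++ b :: y

lemma LetterSubst.length_eq {a b : α} {w w' : List α} (h : LetterSubst a b w w') :
    w.length = w'.length := by
  obtain ⟨x, y, rfl, rfl⟩ := h
  simp

lemma letterSubst_map_iff {f : α → β} (hf : Function.Injective f) {a b : α}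
    {w w' : List α} : LetterSubst (f a) (f b) (w.map f) (w'.map f) ↔ LetterSubst a b w w' := by
  constructor
  · rintro ⟨x, y, hw, hw'⟩
    obtain ⟨x₀, r, rfl, rfl, hr⟩ := List.map_eq_append_iff.mp hw
    obtain ⟨a₀, y₀, rfl, ha, rfl⟩ := List.map_eq_cons_iff.mp hr
    refine ⟨x₀, y₀, by rw [hf ha], List.map_injective_iff.mpr hf ?_⟩
    simp [hw']
  · rintro ⟨x, y, rfl, rfl⟩
    exact ⟨x.map f, y.map f, by simp, by simp⟩

lemma List.eq_iff_forall_mem_zip {w w' : List α} (h : w.length = w'.length) :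
    w = w' ↔ ∀ p ∈ w.zip w', p.1 = p.2 := by
  constructor
  · rintro rfl p hp
    obtain ⟨i, hi, rfl⟩ := List.mem_iff_getElem.mp hp
    simp
  · intro hdiag
    calc w = (w.zip w').map Prod.fst := (List.map_fst_zip h.le).symm
      _ = (w.zip w').map Prod.snd := List.map_congr_left hdiag
      _ = w' := List.map_snd_zip h.ge

lemma letterSubst_iff_zip {a b : α} {w w' : List α} (h : w.length = w'.length) :
    LetterSubst a b w w' ↔
      ∃ x y, w.zip w' = x ++ (a, b) :: y ∧ ∀ p ∈ x ++ y, p.1 = p.2 := by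
  constructor
  · rintro ⟨x, y, rfl, rfl⟩
    refine ⟨x.zip x, y.zip y, by simp [List.zip_append], ?_⟩
    simp only [List.mem_append]
    rintro p (hp | hp) <;> exact ((List.eq_iff_forall_mem_zip rfl).mp rfl) p hp
  · rintro ⟨x, y, hz, hdiag⟩
    have hx : x.map Prod.snd = x.map Prod.fst :=
      List.map_congr_left fun p hp => (hdiag p (List.mem_append_left _ hp)).symm
    have hy : y.map Prod.snd = y.map Prod.fst :=
      List.map_congr_left fun p hp => (hdiag p (List.mem_append_right _ hp)).symm
    refine ⟨x.map Prod.fst, y.map Prod.fst, ?_, ?_⟩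
    · rw [← List.map_fst_zip h.le, hz]
      simp
    · rw [← List.map_snd_zip h.ge, hz]
      simp [hx, hy]

end LetterSubst

section Ecount

variable {α β : Type*} [DecidableEq α] [DecidableEq β] {d : ℕ} {u v : List α}

lemma ecount.symm (h : ecount d u v) : ecount d v u :=
  fun a => (h a).imp Eq.symm And.symm

lemma ecount.mem (hd : 1 ≤ d) (h : ecount d u v) {a : α} (ha : a ∈ u) : a ∈ v := by
  rw [← List.count_pos_iff] at ha ⊢
  rcases h a with h | h <;> omega

lemma ecount.count_eq_one (hd : 2 ≤ d) (h : ecount d u v) {a : α} (ha : u.count a = 1) :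
    v.count a = 1 := by
  rcases h a with h | h <;> omega

lemma ecount.map (h : ecount d u v) (f : α → β) : ecount d (u.map f) (v.map f) := by
  intro b
  -- either the counts agree on the whole fibre of `b`, or some letter of the fibre occurs at
  -- least `d` times on both sides
  by_cases hfiber : ∀ a, f a = b → u.count a = v.count a
  · left
    have hfilter : (u : Multiset α).filter (fun a => b = f a) =
        (v : Multiset α).filter (fun a => b = f a) := by
      ext a
      simp only [Multiset.count_filter, Multiset.coe_count]
      split_ifs with hab
      · exact hfiber a hab.symm
      · rfl
    have := congrArg Multiset.card hfilter
    rwa [← Multiset.count_map, ← Multiset.count_map, Multiset.map_coe, Multiset.map_coe,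
      Multiset.coe_count, Multiset.coe_count] at this
  · right
    push Not at hfiber
    obtain ⟨a, rfl, hne⟩ := hfiber
    obtain ⟨hu, hv⟩ := (h a).resolve_left hne
    exact ⟨hu.trans List.count_le_count_map, hv.trans List.count_le_count_map⟩

lemma List.exists_eq_append_cons_iff {D : α → Prop} {e : α} {L : List α} :
    (∃ x y, L = x ++ e :: y ∧ ∀ p ∈ x ++ y, D p) ↔
      e ∈ L ∧ ∀ p ∈ L, ¬ D p → p = e ∧ L.count e = 1 := by
  constructor
  · rintro ⟨x, y, rfl, hD⟩
    refine ⟨by simp, fun p hp hnD => ?_⟩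
    have hpe : p = e := by
      by_contra hne
      exact hnD (hD p (by simpa [hne] using hp))
    subst hpe
    have : p ∉ x ++ y := fun h => hnD (hD p h)
    simp only [List.mem_append, not_or] at this
    simp [List.count_eq_zero_of_not_mem this.1, List.count_eq_zero_of_not_mem this.2]
  · rintro ⟨he, hD⟩
    obtain ⟨x, y, rfl⟩ := List.append_of_mem he
    refine ⟨x, y, rfl, fun p hp => ?_⟩
    by_contra hnD
    obtain ⟨rfl, hcount⟩ := hD p (List.mem_append.mpr ((List.mem_append.mp hp).imp_right
      (List.mem_cons_of_mem _))) hnD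
    have := List.count_pos_iff.mpr hp
    simp only [List.count_append, List.count_cons_self] at hcount this
    omega

lemma ecount.exists_eq_append_cons (hd : 2 ≤ d) (h : ecount d u v) {D : α → Prop} {e : α}
    (hu : ∃ x y, u = x ++ e :: y ∧ ∀ p ∈ x ++ y, D p) :
    ∃ x y, v = x ++ e :: y ∧ ∀ p ∈ x ++ y, D p := by
  rw [List.exists_eq_append_cons_iff] at hu ⊢
  obtain ⟨he, hD⟩ := hu
  refine ⟨h.mem (by omega) he, fun p hp hnD => ?_⟩
  obtain ⟨rfl, hcount⟩ := hD p (h.symm.mem (by omega) hp) hnD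
  exact ⟨rfl, h.count_eq_one hd hcount⟩

variable {w₁ w₂ w₁' w₂' : List α}

lemma eq_iff_of_ecount_zip (hd : 1 ≤ d) (hw : w₁.length = w₂.length)
    (hw' : w₁'.length = w₂'.length) (h : ecount d (w₁.zip w₂) (w₁'.zip w₂')) :
    w₁ = w₂ ↔ w₁' = w₂' := by
  rw [List.eq_iff_forall_mem_zip hw, List.eq_iff_forall_mem_zip hw']
  exact ⟨fun H p hp => H p (h.symm.mem hd hp), fun H p hp => H p (h.mem hd hp)⟩

lemma letterSubst_iff_of_ecount_zip (hd : 2 ≤ d) (hw : w₁.length = w₂.length)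
    (hw' : w₁'.length = w₂'.length) (h : ecount d (w₁.zip w₂) (w₁'.zip w₂')) {a b : α} :
    LetterSubst a b w₁ w₂ ↔ LetterSubst a b w₁' w₂' := by
  rw [letterSubst_iff_zip hw, letterSubst_iff_zip hw']
  exact ⟨h.exists_eq_append_cons hd, h.symm.exists_eq_append_cons hd⟩

end Ecount

section Convolution

variable {ι V : Type*}

lemma List.map_getElem?_range (w : List V) :
    (List.range w.length).map (fun p => w[p]?) = w.map some := by
  apply List.ext_getElem <;> simp

-- The letters of `conv` are `Option`-padded columns; coordinate `k` of a column of the block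
-- is the `k`-th word's letter, wrapped in `some`.
lemma conv_map_join_getElem? (U : ι → List V) (S : List ι) {k L : ℕ} {i : ι}
    (hk : S[k]? = some i) (hL : (U i).length = L) :
    (conv (S.map U) L).map (fun col => (col[k]?).join) = (U i).map some := by
  subst hL
  rw [conv, List.map_map, ← List.map_getElem?_range]
  refine List.map_congr_left fun p _ => ?_
  simp [List.getElem?_map, hk]

lemma ecount.zip_of_conv [DecidableEq V] {d : ℕ} (S : List ι) (U W : ι → List V)
    {k l : ℕ} {i j : ι} (hi : S[k]? = some i) (hj : S[l]? = some j)
    (hU : (U j).length = (U i).length) (hW : (W j).length = (W i).length)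
    (h : ecount d (conv (S.map U) (U i).length) (conv (S.map W) (W i).length)) :
    ecount d (((U i).map some).zip ((U j).map some)) (((W i).map some).zip ((W j).map some)) := by
  have := h.map fun col => ((col[k]?).join, (col[l]?).join)
  rwa [← List.zip_map', ← List.zip_map', conv_map_join_getElem? U S hi rfl,
    conv_map_join_getElem? U S hj hU, conv_map_join_getElem? W S hi rfl,
    conv_map_join_getElem? W S hj hW] at this

end Convolution

namespace TupEquiv

variable {V : Type} [DecidableEq V] {n k ℓ : ℕ} {u v : Fin k → List V}

lemma ecount_zip (h : TupEquiv n ℓ u v) {i j : Fin k} (hij : (u i).length = (u j).length) :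
    ecount (n ^ (ℓ + 1)) (((u i).map some).zip ((u j).map some))
      (((v i).map some).zip ((v j).map some)) := by
  set S := (List.finRange k).filter fun m => (u m).length == (u i).length
  have hmem : ∀ m, (u m).length = (u i).length → m ∈ S := by simp [S]
  exact ecount.zip_of_conv S u v (List.getElem?_idxOf (hmem i rfl))
    (List.getElem?_idxOf (hmem j hij.symm)) hij.symm ((h.1 i j).mp hij).symm (h.2.2 i)

theorem eq_iff (hn : 0 < n) (h : TupEquiv n ℓ u v) (i j : Fin k) : u i = u j ↔ v i = v j := by
  by_cases hij : (u i).length = (u j).length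
  · have hmap := List.map_injective_iff.mpr (Option.some_injective V)
    rw [← hmap.eq_iff, ← hmap.eq_iff (a := v i)]
    exact eq_iff_of_ecount_zip (Nat.one_le_pow _ _ hn) (by simpa)
      (by simpa using (h.1 i j).mp hij) (h.ecount_zip hij)
  · exact iff_of_false (fun e => hij (congrArg _ e))
      (fun e => hij ((h.1 i j).mpr (congrArg _ e)))

theorem letterSubst_iff (hn : 2 ≤ n) (h : TupEquiv n ℓ u v) (i j : Fin k) (a b : V) :
    LetterSubst a b (u i) (u j) ↔ LetterSubst a b (v i) (v j) := by
  by_cases hij : (u i).length = (u j).length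
  · rw [← letterSubst_map_iff (Option.some_injective V),
      ← letterSubst_map_iff (Option.some_injective V) (w := v i)]
    exact letterSubst_iff_of_ecount_zip (hn.trans (Nat.le_self_pow (by omega) n)) (by simpa)
      (by simpa using (h.1 i j).mp hij) (h.ecount_zip hij)
  · exact iff_of_false (fun hs => hij hs.length_eq)
      (fun hs => hij ((h.1 i j).mpr hs.length_eq))

end TupEquiv

section QuantifierFree

open FirstOrder Language

lemma graphLang_term_eq_var {S α : Type} (t : (graphLang S).Term (α ⊕ Fin 0)) :
    ∃ i, t = Term.var (Sum.inl i) := by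
  rcases t with (i | i) | ⟨f, _⟩
  · exact ⟨i, rfl⟩
  · exact i.elim0
  · exact (f : Empty).elim

theorem realizeIn_iff_of_isQF {S α : Type} {W : Type*} (G : S → W → W → Prop) {u v : α → W}
    (heq : ∀ i j, u i = u j ↔ v i = v j) (hrel : ∀ s i j, G s (u i) (u j) ↔ G s (v i) (v j))
    {φ : (graphLang S).Formula α} (hφ : φ.IsQF) : realizeIn G φ u ↔ realizeIn G φ v := by
  let := graphStructure G
  suffices ∀ xs : Fin 0 → W, BoundedFormula.Realize φ u xs ↔ BoundedFormula.Realize φ v xs from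
    this default
  induction hφ with
  | falsum => exact fun _ => Iff.rfl
  | of_isAtomic h =>
    intro xs
    cases h with
    | equal t₁ t₂ =>
      obtain ⟨i, rfl⟩ := graphLang_term_eq_var t₁
      obtain ⟨j, rfl⟩ := graphLang_term_eq_var t₂
      exact heq i j
    | @rel l R ts =>
      match l, R with
      | 2, s =>
        obtain ⟨i, hi⟩ := graphLang_term_eq_var (ts 0)
        obtain ⟨j, hj⟩ := graphLang_term_eq_var (ts 1)
        change G s ((ts 0).realize (Sum.elim u xs)) ((ts 1).realize (Sum.elim u xs)) ↔
          G s ((ts 0).realize (Sum.elim v xs)) ((ts 1).realize (Sum.elim v xs))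
        rw [hi, hj]
        exact hrel s i j
  | imp _ _ ih₁ ih₂ => exact fun xs => imp_congr (ih₁ xs) (ih₂ xs)

end QuantifierFree

lemma liftRel_iff_letterSubst {V : Type*} (p : V × V) (w w' : List V) :
    liftRel (fun (p : V × V) (s s' : V) => s = p.1 ∧ s' = p.2) p w w' ↔
      LetterSubst p.1 p.2 w w' := by
  constructor
  · rintro ⟨x, y, s, s', ⟨rfl, rfl⟩, hw, hw'⟩
    exact ⟨x, y, hw, hw'⟩
  · rintro ⟨x, y, hw, hw'⟩
    exact ⟨x, y, p.1, p.2, ⟨rfl, rfl⟩, hw, hw'⟩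

theorem stmt14_general (V : Type) [DecidableEq V] (n : ℕ)
    (h2 : 2 ≤ n) (k : ℕ)
    (u v : Fin k → List V) (h : TupEquiv n 0 u v) :
    (∀ i j, u i = u j ↔ v i = v j) ∧
    (∀ i j, ∀ a b : V,
      ((∃ x y : List V, u i = x ++ a :: y ∧ u j = x ++ b :: y) ↔
        (∃ x y : List V, v i = x ++ a :: y ∧ v j = x ++ b :: y))) ∧
    (∀ φ : (graphLang (V × V)).Formula (Fin k), φ.IsQF →
      (realizeIn (liftRel fun (p : V × V) (s s' : V) => s = p.1 ∧ s' = p.2) φ u ↔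
        realizeIn (liftRel fun (p : V × V) (s s' : V) => s = p.1 ∧ s' = p.2) φ v)) := by
  have heq := h.eq_iff (by omega)
  have hsubst := h.letterSubst_iff h2
  refine ⟨heq, hsubst, fun φ hφ => realizeIn_iff_of_isQF _ heq (fun p i j => ?_) hφ⟩
  rw [liftRel_iff_letterSubst, liftRel_iff_letterSubst]
  exact hsubst i j p.1 p.2

/-- Let `V` be a finite alphabet with `|V| = n ≥ 2` and suppose
`(u_1,…,u_k) ≡_{k,0} (v_1,…,v_k)`. Then (1) `u_i = u_j` iff `v_i = v_j`; (2) `u_j` is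
obtained from `u_i` by replacing a single occurrence of `a` by `b` iff `v_j` is so
obtained from `v_i`; consequently (3) the two tuples satisfy the same quantifier-free
first-order formulas in the labelled graph `G⁺`, where `G` is the labelled graph on
`V` with action set `V × V` and edges `a →^{(a,b)} b`. -/
theorem stmt14 (V : Type) [Fintype V] [DecidableEq V] (n : ℕ)
    (hn : Fintype.card V = n) (h2 : 2 ≤ n) (k : ℕ)
    (u v : Fin k → List V) (h : TupEquiv n 0 u v) :
    (∀ i j, u i = u j ↔ v i = v j) ∧
    (∀ i j, ∀ a b : V,
      ((∃ x y : List V, u i = x ++ a :: y ∧ u j = x ++ b :: y) ↔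
        (∃ x y : List V, v i = x ++ a :: y ∧ v j = x ++ b :: y))) ∧
    (∀ φ : (graphLang (V × V)).Formula (Fin k), φ.IsQF →
      (realizeIn (liftRel fun (p : V × V) (s s' : V) => s = p.1 ∧ s' = p.2) φ u ↔
        realizeIn (liftRel fun (p : V × V) (s s' : V) => s = p.1 ∧ s' = p.2) φ v)) :=
  stmt14_general V n h2 k u v h
end

section
/- Let Γ be a finite alphabet with |Γ| = n ≥ 1 and let α ≥ 1. Let u ∈ Γ^* be a word with |u| ≥ α·n and let λ ∈ ℕ with λ ≥ α·n. Then there exists a word v ∈ Γ^* with |v| = λ and u ≡_α v. -/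
section

variable {Γ : Type*} [DecidableEq Γ]

theorem ecount_iff_min_count_eq {d : ℕ} {u v : List Γ} :
    ecount d u v ↔ ∀ a, min (u.count a) d = min (v.count a) d := by
  refine forall_congr' fun a => ?_
  omega

theorem min_count_append_replicate_eq {d : ℕ} {w : List Γ} {a : Γ} (ha : d ≤ w.count a)
    (k : ℕ) (b : Γ) : min ((w ++ List.replicate k a).count b) d = min (w.count b) d := by
  rw [List.count_append, List.count_replicate]
  by_cases hab : a = b
  · subst hab
    omega
  · simp [hab]

variable [Fintype Γ]

theorem sum_count_eq_length (u : List Γ) : ∑ a : Γ, u.count a = u.length := by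
  simpa using Multiset.sum_count_eq_card (s := Finset.univ) (m := (u : Multiset Γ))
    fun a _ => Finset.mem_univ a

theorem exists_le_count_of_mul_card_le_length [Nonempty Γ] {d : ℕ} {u : List Γ}
    (hu : d * Fintype.card Γ ≤ u.length) : ∃ a, d ≤ u.count a := by
  have hsum : ∑ _a : Γ, d ≤ ∑ a : Γ, u.count a := by
    simpa [sum_count_eq_length, mul_comm] using hu
  obtain ⟨a, -, ha⟩ := Finset.exists_le_of_sum_le Finset.univ_nonempty hsum
  exact ⟨a, ha⟩

theorem exists_length_le_count_eq_min (d : ℕ) (u : List Γ) :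
    ∃ w : List Γ, w.length ≤ d * Fintype.card Γ ∧ ∀ a, w.count a = min (u.count a) d := by
  let cap : Multiset Γ := d • Finset.univ.val
  refine ⟨((u : Multiset Γ) ∩ cap).toList, ?_, fun a => ?_⟩
  · calc ((u : Multiset Γ) ∩ cap).toList.length = Multiset.card ((u : Multiset Γ) ∩ cap) :=
          Multiset.length_toList _
      _ ≤ Multiset.card cap := Multiset.card_le_card Multiset.inter_le_right
      _ = d * Fintype.card Γ := by simp [cap, Multiset.card_nsmul]
  · rw [← Multiset.coe_count, Multiset.coe_toList, Multiset.count_inter, Multiset.coe_count]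
    simp [cap]

end

theorem stmt17_general (Γ : Type) [Fintype Γ] [DecidableEq Γ] (n : ℕ)
    (hn : Fintype.card Γ = n) (h1 : 1 ≤ n) (α : ℕ)
    (u : List Γ) (hu : α * n ≤ u.length) (lam : ℕ) (hlam : α * n ≤ lam) :
    ∃ v : List Γ, v.length = lam ∧ ecount α u v := by
  subst hn
  have : Nonempty Γ := Fintype.card_pos_iff.mp h1
  obtain ⟨a₀, ha₀⟩ := exists_le_count_of_mul_card_le_length hu
  obtain ⟨w, hw_len, hw_count⟩ := exists_length_le_count_eq_min α u
  have hw_a₀ : α ≤ w.count a₀ := by rw [hw_count a₀]; omega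
  refine ⟨w ++ List.replicate (lam - w.length) a₀, by simp; omega, ?_⟩
  refine ecount_iff_min_count_eq.mpr fun b => ?_
  rw [min_count_append_replicate_eq hw_a₀, hw_count b]
  omega

/-- Let `Γ` be a finite alphabet with `|Γ| = n ≥ 1` and `α ≥ 1`.
For every word `u ∈ Γ*` with `|u| ≥ α·n` and every `λ ≥ α·n` there is a word
`v ∈ Γ*` with `|v| = λ` and `u ≡_α v`. -/
theorem stmt17 (Γ : Type) [Fintype Γ] [DecidableEq Γ] (n : ℕ)
    (hn : Fintype.card Γ = n) (h1 : 1 ≤ n) (α : ℕ) (hα : 1 ≤ α)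
    (u : List Γ) (hu : α * n ≤ u.length) (lam : ℕ) (hlam : α * n ≤ lam) :
    ∃ v : List Γ, v.length = lam ∧ ecount α u v :=
  stmt17_general Γ n hn h1 α u hu lam hlam
end
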